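/- Let (H, ▷) be a cocommutative post-Hopf algebra. Define x*y := x₍₁₎·(x₍₂₎▷y) and T(x) := ψ_{x₍₁₎}(S(x₍₂₎)), where ψ is the convolution inverse of the map θ_x(y)=x▷y. Then (H, *, 1, Δ, ε, T) is a Hopf algebra (the subadjacent Hopf algebra). -/

import Mathlib

open scoped TensorProduct
open Coalgebra

/-!
Work in the convolution ring `Hom(H, End H)`. There left multiplication `L : x ↦ (y ↦ x · y)`
is invertible with inverse `L ∘ S`, and `θ` is invertible with inverse `ψ`; hence the
subadjacent left multiplication `L* = L ⋆ θ`, `L*_x y = x * y`, is invertible with inverse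
`ψ ⋆ (L ∘ S)`. Given that `θ` is invertible, the two compatibility axioms of `▷` force
`x ▷ 1 = ε(x) 1` and `1 ▷ y = y`, which give the unit laws. Cocommutativity makes `L*`
comultiplicative, i.e. `Δ` is multiplicative for `*`, and together with `θ_{x * y} = θ_x θ_y`
this gives associativity `L*_{x * y} = L*_x L*_y`.
The antipode is `T x = (ψ ⋆ (L ∘ S))_x 1`, so `x₍₁₎ * T x₍₂₎ = ε(x) 1` is `L* ⋆ (L*)⁻¹ = 1`
evaluated at `1`. By associativity this makes `L* ∘ T` a right inverse of `L*` in the ring, hence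
its two-sided inverse, and `(L* ∘ T) ⋆ L* = 1` evaluated at `1` is `T x₍₁₎ * x₍₂₎ = ε(x) 1`.
-/

section

variable (R H : Type*) [CommRing R] [AddCommGroup H] [Module R H] [Coalgebra R H]

/-- A Hopf algebra structure (multiplication, unit, antipode) on the coalgebra `H`:
the multiplication is associative with unit, comultiplication and counit are algebra
maps, and `S` is an antipode (expressed via arbitrary Sweedler representations). -/
structure HopfMul where
  mul : H →ₗ[R] H →ₗ[R] H
  one : H
  S : H →ₗ[R] H
  mul_assoc : ∀ a b c : H, mul (mul a b) c = mul a (mul b c)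
  one_mul : ∀ a : H, mul one a = a
  mul_one : ∀ a : H, mul a one = a
  comul_mul : ∀ (a b : H) {ι₁ : Type*} {ι₂ : Type*} (ra : Coalgebra.Repr R a ι₁) (rb : Coalgebra.Repr R b ι₂),
    comul (R := R) (mul a b) = ∑ i ∈ ra.index, ∑ j ∈ rb.index,
      mul (ra.left i) (rb.left j) ⊗ₜ[R] mul (ra.right i) (rb.right j)
  comul_one : comul (R := R) one = one ⊗ₜ[R] one
  counit_mul : ∀ a b : H, counit (R := R) (mul a b) = counit (R := R) a * counit (R := R) b
  counit_one : counit (R := R) one = 1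
  S_mul_left : ∀ (a : H) {ι : Type*} (r : Coalgebra.Repr R a ι),
    ∑ i ∈ r.index, mul (S (r.left i)) (r.right i) = counit (R := R) a • one
  S_mul_right : ∀ (a : H) {ι : Type*} (r : Coalgebra.Repr R a ι),
    ∑ i ∈ r.index, mul (r.left i) (S (r.right i)) = counit (R := R) a • one

/-- Cocommutativity of the coalgebra `H`. -/
def Cocomm : Prop :=
  ∀ a : H, TensorProduct.comm R H H (comul (R := R) a) = comul (R := R) a

/-- A post-Hopf algebra structure `▷ = tr` on the Hopf algebra `(H, h)`:
`tr` is a coalgebra map satisfying `x▷(y·z) = (x₍₁₎▷y)·(x₍₂₎▷z)` and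
`x▷(y▷z) = (x₍₁₎·(x₍₂₎▷y))▷z`, and `θ_x(y) = x▷y` is convolution invertible with
convolution inverse `ψ = inv`. -/
structure PostHopf (h : HopfMul R H) where
  tr : H →ₗ[R] H →ₗ[R] H
  inv : H →ₗ[R] H →ₗ[R] H
  comul_tr : ∀ (x y : H) {ι₁ : Type*} {ι₂ : Type*} (rx : Coalgebra.Repr R x ι₁) (ry : Coalgebra.Repr R y ι₂),
    comul (R := R) (tr x y) = ∑ i ∈ rx.index, ∑ j ∈ ry.index,
      tr (rx.left i) (ry.left j) ⊗ₜ[R] tr (rx.right i) (ry.right j)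
  counit_tr : ∀ x y : H,
    counit (R := R) (tr x y) = counit (R := R) x * counit (R := R) y
  tr_mul : ∀ (x y z : H) {ι : Type*} (r : Coalgebra.Repr R x ι),
    tr x (h.mul y z) = ∑ i ∈ r.index, h.mul (tr (r.left i) y) (tr (r.right i) z)
  tr_tr : ∀ (x y z : H) {ι : Type*} (r : Coalgebra.Repr R x ι),
    tr x (tr y z) = ∑ i ∈ r.index, tr (h.mul (r.left i) (tr (r.right i) y)) z
  inv_tr : ∀ (x y : H) {ι : Type*} (r : Coalgebra.Repr R x ι),
    ∑ i ∈ r.index, inv (r.left i) (tr (r.right i) y) = counit (R := R) x • y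
  tr_inv : ∀ (x y : H) {ι : Type*} (r : Coalgebra.Repr R x ι),
    ∑ i ∈ r.index, tr (r.left i) (inv (r.right i) y) = counit (R := R) x • y

end

open WithConv

namespace Coalgebra.Repr

universe w

variable {R A : Type*} [CommSemiring R] [AddCommMonoid A] [Module R A] [CoalgebraStruct R A]
  {a : A} {ι : Type*}

/-- `r` reindexed by a type in an arbitrary universe `w`: the fields of `HopfMul` and `PostHopf`
accept index types of one fixed universe only. -/
noncomputable def uLiftFin (r : Repr R a ι) : Repr R a (ULift.{w} (Fin r.index.card)) where
  index := Finset.univ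
  left k := r.left (r.index.equivFin.symm k.down)
  right k := r.right (r.index.equivFin.symm k.down)
  eq := by
    rw [← r.eq, ← Finset.sum_coe_sort r.index]
    exact Fintype.sum_equiv (Equiv.ulift.trans r.index.equivFin.symm) _ _ fun _ => rfl

end Coalgebra.Repr

namespace Coalgebra

variable {R A : Type*} [CommSemiring R] [AddCommMonoid A] [Module R A] [Coalgebra R A]
  {a : A} {ι : Type*}

lemma sum_counit_right_smul (r : Repr R a ι) :
    ∑ i ∈ r.index, counit (R := R) (r.right i) • r.left i = a := by
  simpa only [map_sum, TensorProduct.lift.tmul, LinearMap.flip_apply, LinearMap.lsmul_apply,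
    one_smul] using congr(TensorProduct.lift (LinearMap.lsmul R A).flip $(sum_tmul_counit_eq r))

lemma sum_counit_mul_counit (r : Repr R a ι) :
    ∑ i ∈ r.index, counit (R := R) (r.left i) * counit (R := R) (r.right i) = counit a := by
  simpa only [map_sum, map_smul, smul_eq_mul] using congr(counit (R := R) $(sum_counit_smul r))

end Coalgebra

namespace LinearMap

variable {R C A : Type*} [CommSemiring R] [AddCommMonoid C] [Module R C] [Coalgebra R C]
  [Semiring A] [Algebra R A]

lemma convMul_apply_of_comul_eq {e : C} (he : comul (R := R) e = e ⊗ₜ e)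
    (f g : WithConv (C →ₗ[R] A)) : (f * g) e = f e * g e := by
  simp [he]

end LinearMap

section TensorSquare

variable {R H : Type*} [CommRing R] [AddCommGroup H] [Module R H] [Coalgebra R H]

noncomputable def tensorSquare (f : WithConv (H →ₗ[R] Module.End R H)) :
    WithConv (H →ₗ[R] Module.End R (H ⊗[R] H)) :=
  toConv ((Module.endTensorEndAlgHom (S := R) (A := R)).toLinearMap ∘ₗ
    TensorProduct.map f.ofConv f.ofConv ∘ₗ comul)

lemma tensorSquare_apply {ι : Type*} (f : WithConv (H →ₗ[R] Module.End R H)) {x : H}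
    (r : Repr R x ι) :
    tensorSquare f x = ∑ i ∈ r.index, TensorProduct.map (f (r.left i)) (f (r.right i)) := by
  simp [tensorSquare, ← r.eq, Module.endTensorEndAlgHom_apply,
    TensorProduct.AlgebraTensorModule.map_eq]

lemma tensorSquare_mul [IsCocomm R H] (f g : WithConv (H →ₗ[R] Module.End R H)) :
    tensorSquare (f * g) = tensorSquare f * tensorSquare g := by
  have h := congr(((Module.endTensorEndAlgHom (S := R) (A := R)).toLinearMap ∘ₗ
    ($(TensorProduct.map_convMul_map (f := f) (g := f) (h := g) (k := g)).ofConv ∘ₗ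
      (comulCoalgHom R H).toLinearMap)))
  rw [LinearMap.convMul_comp_coalgHom_distrib, LinearMap.algHom_comp_convMul_distrib] at h
  exact congr(toConv $h.symm)

def IsComultiplicative (f : WithConv (H →ₗ[R] Module.End R H)) : Prop :=
  ∀ x y, comul (R := R) (f x y) = tensorSquare f x (comul y)

lemma tensorSquare_apply_comul (f : WithConv (H →ₗ[R] Module.End R H)) {x y : H} {ι κ : Type*}
    (rx : Repr R x ι) (ry : Repr R y κ) :
    tensorSquare f x (comul y) = ∑ i ∈ rx.index, ∑ j ∈ ry.index,
      f (rx.left i) (ry.left j) ⊗ₜ[R] f (rx.right i) (ry.right j) := by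
  rw [tensorSquare_apply f rx, ← ry.eq]
  simp only [map_sum, LinearMap.sum_apply, TensorProduct.map_tmul]
  exact Finset.sum_comm

lemma IsComultiplicative.comul_apply {f : WithConv (H →ₗ[R] Module.End R H)}
    (hf : IsComultiplicative f) {x y : H} {ι κ : Type*} (rx : Repr R x ι) (ry : Repr R y κ) :
    comul (R := R) (f x y) = ∑ i ∈ rx.index, ∑ j ∈ ry.index,
      f (rx.left i) (ry.left j) ⊗ₜ[R] f (rx.right i) (ry.right j) :=
  (hf x y).trans (tensorSquare_apply_comul f rx ry)

lemma IsComultiplicative.of_comul_apply {f : WithConv (H →ₗ[R] Module.End R H)}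
    {ι κ : H → Type*} (rx : ∀ x, Repr R x (ι x)) (ry : ∀ y, Repr R y (κ y))
    (hf : ∀ x y, comul (R := R) (f x y) = ∑ i ∈ (rx x).index, ∑ j ∈ (ry y).index,
      f ((rx x).left i) ((ry y).left j) ⊗ₜ[R] f ((rx x).right i) ((ry y).right j)) :
    IsComultiplicative f :=
  fun x y => (hf x y).trans (tensorSquare_apply_comul f (rx x) (ry y)).symm

lemma IsComultiplicative.mul [IsCocomm R H] {f g : WithConv (H →ₗ[R] Module.End R H)}
    (hf : IsComultiplicative f) (hg : IsComultiplicative g) : IsComultiplicative (f * g) := by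
  intro x y
  simp only [tensorSquare_mul, (ℛ R x).convMul_apply, LinearMap.sum_apply, Module.End.mul_apply,
    map_sum, hf _, hg _]

end TensorSquare

namespace HopfMul

variable {R H : Type*} [CommRing R] [AddCommGroup H] [Module R H] [Coalgebra R H]
  (h : HopfMul R H)

noncomputable def lmul : WithConv (H →ₗ[R] Module.End R H) := toConv h.mul

noncomputable def lmulAntipode : WithConv (H →ₗ[R] Module.End R H) := toConv (h.mul ∘ₗ h.S)

lemma mul_one_eq_one : h.mul h.one = 1 := LinearMap.ext h.one_mul

lemma mul_mul_eq_mul_mul (a b : H) : h.mul (h.mul a b) = h.mul a * h.mul b :=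
  LinearMap.ext (h.mul_assoc a b)

lemma lmul_mul_lmulAntipode : h.lmul * h.lmulAntipode = 1 := by
  ext x y
  rw [(ℛ R x).uLiftFin.convMul_apply]
  simp only [lmul, lmulAntipode, LinearMap.comp_apply, ← mul_mul_eq_mul_mul]
  rw [← map_sum, h.S_mul_right]
  simp [mul_one_eq_one]

lemma lmulAntipode_mul_lmul : h.lmulAntipode * h.lmul = 1 := by
  ext x y
  rw [(ℛ R x).uLiftFin.convMul_apply]
  simp only [lmul, lmulAntipode, LinearMap.comp_apply, ← mul_mul_eq_mul_mul]
  rw [← map_sum, h.S_mul_left]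
  simp [mul_one_eq_one]

lemma isComultiplicative_lmul : IsComultiplicative h.lmul :=
  .of_comul_apply (fun x => (ℛ R x).uLiftFin) (fun x => (ℛ R x).uLiftFin)
    fun a b => h.comul_mul a b _ _

end HopfMul

namespace PostHopf

variable {R H : Type*} [CommRing R] [AddCommGroup H] [Module R H] [Coalgebra R H]
  {h : HopfMul R H} (P : PostHopf R H h)

noncomputable def theta : WithConv (H →ₗ[R] Module.End R H) := toConv P.tr

noncomputable def psi : WithConv (H →ₗ[R] Module.End R H) := toConv P.inv

lemma theta_mul_psi : P.theta * P.psi = 1 := by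
  ext x y
  rw [(ℛ R x).uLiftFin.convMul_apply]
  simpa [theta, psi] using P.tr_inv x y _

lemma psi_mul_theta : P.psi * P.theta = 1 := by
  ext x y
  rw [(ℛ R x).uLiftFin.convMul_apply]
  simpa [theta, psi] using P.inv_tr x y _

lemma isComultiplicative_theta : IsComultiplicative P.theta :=
  .of_comul_apply (fun x => (ℛ R x).uLiftFin) (fun x => (ℛ R x).uLiftFin)
    fun x y => P.comul_tr x y _ _

noncomputable def lmulTr (b : H) : WithConv (H →ₗ[R] Module.End R H) :=
  toConv (h.mul ∘ₗ P.tr.flip b)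

lemma lmulTr_mul_theta (b : H) :
    P.lmulTr b * P.theta = toConv (LinearMap.mulRight R (h.mul b) ∘ₗ P.tr) := by
  ext x z
  rw [(ℛ R x).uLiftFin.convMul_apply]
  simpa [lmulTr, theta] using (P.tr_mul x b z _).symm

lemma lmulTr_one : P.lmulTr h.one = 1 := calc
  P.lmulTr h.one = P.lmulTr h.one * P.theta * P.psi := by rw [mul_assoc, theta_mul_psi, mul_one]
  _ = P.theta * P.psi := by
    rw [lmulTr_mul_theta, HopfMul.mul_one_eq_one, LinearMap.mulRight_one, LinearMap.id_comp]
    rfl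
  _ = 1 := P.theta_mul_psi

lemma tr_apply_one (x : H) : P.tr x h.one = counit (R := R) x • h.one := by
  simpa [lmulTr, h.mul_one] using congr($(P.lmulTr_one) x h.one)

noncomputable def subMul : WithConv (H →ₗ[R] Module.End R H) := h.lmul * P.theta

lemma subMul_eq_sum (x : H) {ι : Type*} (r : Repr R x ι) :
    P.subMul x = ∑ i ∈ r.index, h.mul (r.left i) * P.tr (r.right i) :=
  r.convMul_apply _ _

lemma subMul_apply (x y : H) {ι : Type*} (r : Repr R x ι) :
    P.subMul x y = ∑ i ∈ r.index, h.mul (r.left i) (P.tr (r.right i) y) := by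
  simp [P.subMul_eq_sum x r]

lemma subMul_apply_one (x : H) : P.subMul x h.one = x := by
  simpa [P.subMul_apply x h.one (ℛ R x), tr_apply_one, h.mul_one]
    using sum_counit_right_smul (ℛ R x)

lemma tr_subMul (x y : H) : P.tr (P.subMul x y) = P.tr x * P.tr y := by
  ext z
  rw [P.subMul_apply x y (ℛ R x).uLiftFin, map_sum, LinearMap.sum_apply]
  exact (P.tr_tr x y z _).symm

lemma tr_one : P.tr h.one = 1 := by
  have idem : P.tr h.one * P.tr h.one = P.tr h.one := by rw [← tr_subMul, subMul_apply_one]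
  have right_inv : P.tr h.one * P.inv h.one = 1 := by
    simpa [LinearMap.convMul_apply_of_comul_eq h.comul_one, h.counit_one, theta, psi]
      using congr($(P.theta_mul_psi) h.one)
  calc P.tr h.one = P.tr h.one * P.tr h.one * P.inv h.one := by rw [mul_assoc, right_inv, mul_one]
    _ = 1 := by rw [idem, right_inv]

lemma subMul_one : P.subMul h.one = 1 := by
  simp [subMul, LinearMap.convMul_apply_of_comul_eq h.comul_one, HopfMul.lmul, theta,
    HopfMul.mul_one_eq_one, tr_one]

lemma counit_subMul (x y : H) :
    counit (R := R) (P.subMul x y) = counit (R := R) x * counit (R := R) y := by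
  simp [P.subMul_apply x y (ℛ R x), h.counit_mul, P.counit_tr, ← mul_assoc, ← Finset.sum_mul,
    sum_counit_mul_counit]

lemma isComultiplicative_subMul (hc : Cocomm R H) : IsComultiplicative P.subMul :=
  have : IsCocomm R H := ⟨LinearMap.ext hc⟩
  h.isComultiplicative_lmul.mul P.isComultiplicative_theta

noncomputable def subMulRepr (hc : Cocomm R H) {x y : H} {ι κ : Type*} (rx : Repr R x ι)
    (ry : Repr R y κ) : Repr R (P.subMul x y) (ι × κ) where
  index := rx.index ×ˢ ry.index
  left p := P.subMul (rx.left p.1) (ry.left p.2)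
  right p := P.subMul (rx.right p.1) (ry.right p.2)
  eq := by rw [Finset.sum_product, (P.isComultiplicative_subMul hc).comul_apply rx ry]

noncomputable def lmulSubMul (b : H) : WithConv (H →ₗ[R] Module.End R H) :=
  toConv (h.mul ∘ₗ P.subMul.ofConv.flip b)

lemma lmul_mul_lmulTr (b : H) : h.lmul * P.lmulTr b = P.lmulSubMul b := by
  ext x z
  rw [(ℛ R x).convMul_apply]
  simp [HopfMul.lmul, lmulTr, lmulSubMul, ← HopfMul.mul_mul_eq_mul_mul, P.subMul_apply x b (ℛ R x)]

lemma lmulSubMul_mul_theta (b : H) :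
    P.lmulSubMul b * P.theta =
      toConv (LinearMap.mulRight R (h.mul b) ∘ₗ P.subMul.ofConv) := by
  rw [← lmul_mul_lmulTr, mul_assoc, lmulTr_mul_theta]
  ext x z
  simp [(ℛ R x).convMul_apply, subMul, theta, mul_assoc]

lemma subMul_subMul (hc : Cocomm R H) (x y : H) :
    P.subMul (P.subMul x y) = P.subMul x * P.subMul y := by
  let rx := ℛ R x
  let ry := ℛ R y
  calc P.subMul (P.subMul x y)
      = ∑ j ∈ ry.index, (∑ i ∈ rx.index,
          h.mul (P.subMul (rx.left i) (ry.left j)) * P.tr (rx.right i)) * P.tr (ry.right j) := by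
        simp only [P.subMul_eq_sum _ (P.subMulRepr hc rx ry), subMulRepr, Finset.sum_product]
        rw [Finset.sum_comm]
        simp [tr_subMul, Finset.sum_mul, mul_assoc]
    _ = ∑ j ∈ ry.index, (P.lmulSubMul (ry.left j) * P.theta) x * P.tr (ry.right j) := by
        simp [rx.convMul_apply, lmulSubMul, theta]
    _ = ∑ j ∈ ry.index, P.subMul x * h.mul (ry.left j) * P.tr (ry.right j) := by
        simp [lmulSubMul_mul_theta]
    _ = P.subMul x * P.subMul y := by
        simp [mul_assoc, ← Finset.mul_sum, P.subMul_eq_sum y ry]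

lemma subMul_mul_psi_mul_lmulAntipode : P.subMul * (P.psi * h.lmulAntipode) = 1 := by
  rw [subMul, mul_assoc, ← mul_assoc P.theta, theta_mul_psi, one_mul, h.lmul_mul_lmulAntipode]

lemma psi_mul_lmulAntipode_mul_subMul : P.psi * h.lmulAntipode * P.subMul = 1 := by
  rw [subMul, mul_assoc, ← mul_assoc h.lmulAntipode, h.lmulAntipode_mul_lmul, one_mul,
    psi_mul_theta]

noncomputable def subAntipode : H →ₗ[R] H := (P.psi * h.lmulAntipode).ofConv.flip h.one

lemma subAntipode_apply (x : H) {ι : Type*} (r : Repr R x ι) :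
    P.subAntipode x = ∑ i ∈ r.index, P.inv (r.left i) (h.S (r.right i)) := by
  simp [subAntipode, r.convMul_apply, psi, HopfMul.lmulAntipode, h.mul_one]

lemma sum_subMul_subAntipode (x : H) {ι : Type*} (r : Repr R x ι) :
    ∑ i ∈ r.index, P.subMul (r.left i) (P.subAntipode (r.right i)) = counit (R := R) x • h.one := by
  simpa [subAntipode, r.convMul_apply] using congr($(P.subMul_mul_psi_mul_lmulAntipode) x h.one)

lemma subMul_comp_subAntipode (hc : Cocomm R H) :
    toConv (P.subMul.ofConv ∘ₗ P.subAntipode) = P.psi * h.lmulAntipode := by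
  refine (left_inv_eq_right_inv P.psi_mul_lmulAntipode_mul_subMul ?_).symm
  ext x y
  rw [(ℛ R x).convMul_apply]
  simp [← P.subMul_subMul hc, ← map_sum, sum_subMul_subAntipode, subMul_one]

lemma sum_subAntipode_subMul (hc : Cocomm R H) (x : H) {ι : Type*} (r : Repr R x ι) :
    ∑ i ∈ r.index, P.subMul (P.subAntipode (r.left i)) (r.right i) = counit (R := R) x • h.one := by
  have := congr($(P.psi_mul_lmulAntipode_mul_subMul) x h.one)
  rw [← P.subMul_comp_subAntipode hc, r.convMul_apply] at this
  simpa [subMul_apply_one] using this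

noncomputable def subadjacent (hc : Cocomm R H) : HopfMul R H where
  mul := P.subMul.ofConv
  one := h.one
  S := P.subAntipode
  mul_assoc a b c := congr($(P.subMul_subMul hc a b) c)
  one_mul a := by simp [P.subMul_one]
  mul_one := P.subMul_apply_one
  comul_mul _ _ _ _ := (P.isComultiplicative_subMul hc).comul_apply
  comul_one := h.comul_one
  counit_mul := P.counit_subMul
  counit_one := h.counit_one
  S_mul_left _ _ := P.sum_subAntipode_subMul hc _
  S_mul_right _ _ := P.sum_subMul_subAntipode _

end PostHopf

variable (R H : Type*) [CommRing R] [AddCommGroup H] [Module R H] [Coalgebra R H]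

/-- The subadjacent Hopf algebra of a cocommutative post-Hopf algebra:
`x*y := x₍₁₎·(x₍₂₎▷y)` with antipode `T(x) := ψ_{x₍₁₎}(S(x₍₂₎))`. -/
theorem postHopf_subadjacent (h : HopfMul R H) (hc : Cocomm R H) (P : PostHopf R H h) :
    ∃ Q : HopfMul R H, Q.one = h.one ∧
      (∀ (x y : H) {ι : Type*} (r : Coalgebra.Repr R x ι),
        Q.mul x y = ∑ i ∈ r.index, h.mul (r.left i) (P.tr (r.right i) y)) ∧
      (∀ (x : H) {ι : Type*} (r : Coalgebra.Repr R x ι),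
        Q.S x = ∑ i ∈ r.index, P.inv (r.left i) (h.S (r.right i))) :=
  ⟨P.subadjacent hc, rfl, fun x y _ r => P.subMul_apply x y r, fun x _ r => P.subAntipode_apply x r⟩
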